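/- arXiv:2605.22669 — 2 statements merged into one kernel-verified Lean document; each statement's English description precedes it below -/
import Mathlib

section
/- Let G be a finite group with a normal p-complement N (i.e., N ⊴ G, p does not divide |N|, and G/N is a p-group), let x ∈ G be a p-element and let P be a Sylow p-subgroup of G containing x. Then Sub_G(x) = ⟨P, C_N(x)⟩. -/
/-!
A Sylow `p`-subgroup is nilpotent, so `⟨x⟩` is subnormal in `⟨x, y⟩` for every `y ∈ P`, and
`⟨x⟩` is even normal in `⟨x, c⟩` when `c` centralizes `x`; this gives `⊇`.

Conversely, let `⟨x⟩` be subnormal in `H = ⟨x, y⟩`. Climbing a subnormal chain `⟨x⟩ = H₀ ⊴ ⋯ ⊴ H`,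
`x` centralizes every `Hᵢ ∩ N`: for `m ∈ Hᵢ₊₁ ∩ N` the commutator `[x, m]` lies in `Hᵢ ∩ N`, so it
commutes with `x`, whence its order divides both `|x|` and `|N|` and it is trivial. As `H / (H ∩ N)`
is a `p`-group, `H = Q (H ∩ N)` for a Sylow `p`-subgroup `Q` of `H` containing `x`. Finally, since
`G = N P` and `P ∩ N = 1`, every Sylow `p`-subgroup of `G` containing `x` is `P ^ n` for some
`n ∈ C_N(x)`, so `Q ≤ ⟨P, C_N(x)⟩`.
-/

/-- `H` is a normal subgroup of `K` (in particular `H ≤ K`). -/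
def normalIn {G : Type*} [Group G] (H K : Subgroup G) : Prop :=
  H ≤ K ∧ ∀ k ∈ K, ∀ h ∈ H, k * h * k⁻¹ ∈ H

/-- `H` is subnormal in `K`: there is a chain `H = H₀ ⊴ H₁ ⊴ ⋯ ⊴ Hₙ = K`. -/
def subnormalIn {G : Type*} [Group G] (H K : Subgroup G) : Prop :=
  ∃ n : ℕ, ∃ f : Fin (n + 1) → Subgroup G,
    f 0 = H ∧ f (Fin.last n) = K ∧ ∀ i : Fin n, normalIn (f i.castSucc) (f i.succ)

/-- The subnormalizer subset `S_G(x) = {y ∈ G : ⟨x⟩ is subnormal in ⟨x, y⟩}`. -/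
def subnSet {G : Type*} [Group G] (x : G) : Set G :=
  {y | subnormalIn (Subgroup.zpowers x) (Subgroup.closure {x, y})}

/-- The subnormalizer `Sub_G(x) = ⟨S_G(x)⟩`. -/
def SubG {G : Type*} [Group G] (x : G) : Subgroup G :=
  Subgroup.closure (subnSet x)

open Subgroup

section Subnormal

variable {G : Type*} [Group G]

lemma subnormalIn_refl (H : Subgroup G) : subnormalIn H H :=
  ⟨0, fun _ => H, rfl, rfl, fun i => i.elim0⟩

lemma normalIn.trans_subnormalIn {H K L : Subgroup G} (hHK : normalIn H K)
    (hKL : subnormalIn K L) : subnormalIn H L := by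
  obtain ⟨n, f, hf0, hfn, hf⟩ := hKL
  refine ⟨n + 1, Fin.cons H f, rfl, by rw [← Fin.succ_last, Fin.cons_succ, hfn], ?_⟩
  intro i
  induction i using Fin.cases with
  | zero => simpa [hf0] using hHK
  | succ i => simpa [← Fin.succ_castSucc] using hf i

lemma normalIn.subnormalIn {H K : Subgroup G} (h : normalIn H K) : subnormalIn H K :=
  h.trans_subnormalIn (subnormalIn_refl K)

lemma subnormalIn.induction {H K : Subgroup G} (motive : Subgroup G → Prop) (hH : motive H)
    (step : ∀ A B, normalIn A B → motive A → motive B) (h : subnormalIn H K) : motive K := by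
  obtain ⟨n, f, hf0, hfn, hf⟩ := h
  have key : ∀ i, motive (f i) := fun i =>
    Fin.induction (hf0 ▸ hH) (fun i hi => step _ _ (hf i) hi) i
  exact hfn ▸ key _

lemma normalIn_of_le_centralizer {H K : Subgroup G} (hHK : H ≤ K) (hK : K ≤ centralizer H) :
    normalIn H K := by
  refine ⟨hHK, fun k hk h hh => ?_⟩
  rwa [← mem_centralizer_iff.mp (hK hk) h hh, mul_inv_cancel_right]

lemma normalIn_inf_normalizer {H K : Subgroup G} (hHK : H ≤ K) :
    normalIn H (K ⊓ normalizer H) :=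
  ⟨le_inf hHK le_normalizer, fun _ hk h hh => (mem_normalizer_iff.mp hk.2 h).mp hh⟩

lemma lt_inf_normalizer_of_isNilpotent {H K : Subgroup G} [Group.IsNilpotent K] (h : H < K) :
    H < K ⊓ normalizer H := by
  have hlt : H.subgroupOf K < (normalizer H).subgroupOf K := by
    rw [subgroupOf_normalizer_eq h.le]
    exact Group.normalizerCondition_of_isNilpotent _
      (lt_top_iff_ne_top.mpr fun hH => h.not_ge (subgroupOf_eq_top.mp hH))
  obtain ⟨z, hz, hzH⟩ := SetLike.exists_of_lt hlt
  exact SetLike.lt_iff_le_and_exists.mpr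
    ⟨le_inf h.le le_normalizer, (z : G), mem_inf.mpr ⟨z.2, mem_subgroupOf.mp hz⟩, hzH⟩

lemma subnormalIn_of_le_of_isNilpotent [Finite G] {H K : Subgroup G} [Group.IsNilpotent K]
    (hHK : H ≤ K) : subnormalIn H K := by
  induction H using WellFoundedGT.induction with
  | _ H ih =>
    obtain rfl | hlt := hHK.eq_or_lt
    · exact subnormalIn_refl H
    · have hM := lt_inf_normalizer_of_isNilpotent hlt
      exact (normalIn_inf_normalizer hHK).trans_subnormalIn (ih _ hM inf_le_left)

end Subnormal

section Centralizer

variable {G : Type*} [Group G]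

lemma eq_one_of_mem_of_pow_eq_one {N : Subgroup G} {c : G} (hc : c ∈ N) {n : ℕ}
    (hcn : c ^ n = 1) (hn : n.Coprime (Nat.card N)) : c = 1 :=
  orderOf_eq_one_iff.mp <|
    Nat.eq_one_of_dvd_coprimes hn (orderOf_dvd_of_pow_eq_one hcn) (orderOf_dvd_natCard N hc)

lemma inv_mul_conj_mem {N : Subgroup G} [hN : N.Normal] (x : G) {m : G} (hm : m ∈ N) :
    x⁻¹ * (m⁻¹ * x * m) ∈ N := by
  simpa [mul_assoc] using mul_mem (hN.conj_mem m⁻¹ (inv_mem hm) x⁻¹) hm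

lemma mem_centralizer_singleton_of_conj_eq {x m : G} (h : m⁻¹ * x * m = x) :
    m ∈ centralizer {x} :=
  mem_centralizer_singleton_iff.mpr (by simpa [mul_assoc] using (congrArg (m * ·) h).symm)

lemma inf_le_centralizer_of_normalIn {N : Subgroup G} [N.Normal] {x : G}
    (hx : (orderOf x).Coprime (Nat.card N)) {A B : Subgroup G} (hxA : x ∈ A)
    (hAB : normalIn A B) (hA : A ⊓ N ≤ centralizer {x}) : B ⊓ N ≤ centralizer {x} := by
  intro m ⟨hmB, hmN⟩
  set c := x⁻¹ * (m⁻¹ * x * m)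
  have hcA : c ∈ A := mul_mem (inv_mem hxA) (by simpa using hAB.2 m⁻¹ (inv_mem hmB) x hxA)
  have hcN : c ∈ N := inv_mul_conj_mem x hmN
  have hcx : Commute x c := (mem_centralizer_singleton_iff.mp (hA ⟨hcA, hcN⟩)).symm
  have hxc : x * c = m⁻¹ * x * m⁻¹⁻¹ := by simp [c]
  -- `x * c` is a conjugate of `x`, so `c` is killed by the order of `x`
  have hc_pow : c ^ orderOf x = 1 := by
    have hconj : (x * c) ^ orderOf x = 1 := by rw [hxc, conj_pow, pow_orderOf_eq_one]; group
    rwa [hcx.mul_pow, pow_orderOf_eq_one, one_mul] at hconj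
  rw [eq_one_of_mem_of_pow_eq_one hcN hc_pow hx, mul_one, inv_inv] at hxc
  exact mem_centralizer_singleton_of_conj_eq hxc.symm

lemma inf_le_centralizer_of_subnormalIn {N : Subgroup G} [N.Normal] {x : G}
    (hx : (orderOf x).Coprime (Nat.card N)) {K : Subgroup G}
    (h : subnormalIn (zpowers x) K) : K ⊓ N ≤ centralizer {x} :=
  (h.induction (fun A => x ∈ A ∧ A ⊓ N ≤ centralizer {x})
    ⟨mem_zpowers x, inf_le_left.trans (zpowers_le.mpr (mem_centralizer_singleton_iff.mpr rfl))⟩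
    (fun _ _ hAB ⟨hxA, hA⟩ => ⟨hAB.1 hxA, inf_le_centralizer_of_normalIn hx hxA hAB hA⟩)).2

end Centralizer

section NormalComplement

variable {G : Type*} [Group G] {p : ℕ}

lemma isPGroup_quotient_subgroupOf {N : Subgroup G} [N.Normal] (hN : IsPGroup p (G ⧸ N))
    (H : Subgroup G) : IsPGroup p (H ⧸ N.subgroupOf H) := by
  intro g
  induction g using QuotientGroup.induction_on with
  | H h =>
    obtain ⟨k, hk⟩ := hN (h : G)
    refine ⟨k, ?_⟩
    rw [← QuotientGroup.mk_pow, QuotientGroup.eq_one_iff] at hk ⊢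
    simpa [mem_subgroupOf] using hk

variable [Fact p.Prime]

lemma Sylow.sup_eq_top_of_isPGroup_quotient [Finite G] {N : Subgroup G} [N.Normal]
    (hN : IsPGroup p (G ⧸ N)) (Q : Sylow p G) : (Q : Subgroup G) ⊔ N = ⊤ := by
  let Q' := Q.mapSurjective (QuotientGroup.mk'_surjective N)
  have hQ' : (Q' : Subgroup (G ⧸ N)) = ⊤ := (Q'.3 (hN.to_subgroup ⊤) le_top).symm
  rw [Sylow.coe_mapSurjective] at hQ'
  rw [← QuotientGroup.ker_mk' N, ← comap_map_eq, hQ', comap_top]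

lemma exists_isPGroup_mem_le_sup_inf [Finite G] {N : Subgroup G} [N.Normal]
    (hN : IsPGroup p (G ⧸ N)) {H : Subgroup G} {x : G} (hxH : x ∈ H)
    (hx : IsPGroup p (zpowers x)) :
    ∃ Q : Subgroup G, IsPGroup p Q ∧ x ∈ Q ∧ H ≤ Q ⊔ (H ⊓ N) := by
  let x' : H := ⟨x, hxH⟩
  have hx' : IsPGroup p (zpowers x') :=
    (hx.comap_subtype (K := H)).to_le (zpowers_le.mpr (mem_subgroupOf.mpr (mem_zpowers x)))
  obtain ⟨Q, hQ⟩ := hx'.exists_le_sylow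
  have hsup := Q.sup_eq_top_of_isPGroup_quotient (isPGroup_quotient_subgroupOf hN H)
  refine ⟨Q.map H.subtype, Q.2.map _, ⟨x', hQ (mem_zpowers x'), rfl⟩, fun y hy => ?_⟩
  obtain ⟨q, hq, n, hn, hqn⟩ := mem_sup_of_normal_right.mp (hsup ▸ mem_top (⟨y, hy⟩ : H))
  have hy' : (q : G) * n = y := congrArg Subtype.val hqn
  rw [← hy']
  exact mul_mem_sup ⟨q, hq, rfl⟩ ⟨n.2, hn⟩

lemma IsPGroup.disjoint_of_not_dvd_natCard [Finite G] {P N : Subgroup G} (hP : IsPGroup p P)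
    (hN : ¬ p ∣ Nat.card N) : Disjoint P N := by
  obtain ⟨k, hk⟩ := hP.exists_card_eq
  exact disjoint_of_coprime_natCard
    (hk ▸ Nat.Coprime.pow_left k ((Nat.Prime.coprime_iff_not_dvd Fact.out).mpr hN))

lemma Sylow.le_sup_inf_centralizer [Finite G] {N : Subgroup G} [N.Normal]
    (hN : ¬ p ∣ Nat.card N) (hq : IsPGroup p (G ⧸ N)) {x : G} {P P₁ : Sylow p G}
    (hxP : x ∈ P) (hxP₁ : x ∈ P₁) :
    (P₁ : Subgroup G) ≤ (P : Subgroup G) ⊔ (N ⊓ centralizer {x}) := by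
  obtain ⟨g, rfl⟩ := MulAction.exists_smul_eq G P P₁
  have hg : g ∈ N ⊔ (P : Subgroup G) := by
    rw [sup_comm, P.sup_eq_top_of_isPGroup_quotient hq]; exact mem_top g
  obtain ⟨n, hn, a, ha, rfl⟩ := mem_sup_of_normal_left.mp hg
  have hnP : n • P = (n * a) • P := by
    rw [mul_smul, Sylow.smul_eq_iff_mem_normalizer.mpr (le_normalizer ha)]
  replace hxP₁ : x ∈ ((n • P : Sylow p G) : Subgroup G) := hnP ▸ hxP₁
  rw [← hnP, Sylow.coe_subgroup_smul]
  rw [Sylow.coe_subgroup_smul] at hxP₁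
  have hxn : n⁻¹ * x * n ∈ (P : Subgroup G) := by
    simpa [mem_pointwise_smul_iff_inv_smul_mem, MulAut.conj] using hxP₁
  have hdisj := P.2.disjoint_of_not_dvd_natCard hN
  have hnx : n ∈ N ⊓ centralizer {x} :=
    ⟨hn, mem_centralizer_singleton_of_conj_eq (inv_mul_eq_one.mp
      (disjoint_def.mp hdisj (mul_mem (inv_mem hxP) hxn) (inv_mul_conj_mem x hn))).symm⟩
  rintro _ ⟨s, hs, rfl⟩
  have hn' : n ∈ (P : Subgroup G) ⊔ (N ⊓ centralizer {x}) := mem_sup_right hnx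
  simpa [MulAut.conj] using mul_mem (mul_mem hn' (mem_sup_left hs)) (inv_mem hn')

end NormalComplement

section Subnormalizer

variable {G : Type*} [Group G]

lemma zpowers_le_closure_pair (x y : G) : zpowers x ≤ closure {x, y} :=
  zpowers_le.mpr (subset_closure (Set.mem_insert x _))

lemma mem_subnSet_of_mem_centralizer {x c : G} (hc : c ∈ centralizer {x}) : c ∈ subnSet x := by
  have hclosure : closure {x, c} ≤ centralizer (zpowers x : Set G) := by
    rw [zpowers_eq_closure, centralizer_closure, closure_le]
    rintro z (rfl | rfl)
    · exact mem_centralizer_singleton_iff.mpr rfl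
    · exact hc
  exact (normalIn_of_le_centralizer (zpowers_le_closure_pair x c) hclosure).subnormalIn

lemma mem_subnSet_of_isPGroup [Finite G] {p : ℕ} [Fact p.Prime] {K : Subgroup G}
    (hK : IsPGroup p K) {x y : G} (hx : x ∈ K) (hy : y ∈ K) : y ∈ subnSet x := by
  have hle : closure {x, y} ≤ K := by
    rw [closure_le]
    rintro z (rfl | rfl)
    · exact hx
    · exact hy
  have : Group.IsNilpotent (closure {x, y}) := (hK.to_le hle).isNilpotent
  exact subnormalIn_of_le_of_isNilpotent (zpowers_le_closure_pair x y)

lemma closure_pair_le_sup_inf_centralizer [Finite G] {p : ℕ} [Fact p.Prime] {N : Subgroup G}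
    [N.Normal] (hN : ¬ p ∣ Nat.card N) (hq : IsPGroup p (G ⧸ N)) {x y : G} {k : ℕ}
    (hxk : orderOf x = p ^ k) {P : Sylow p G} (hxP : x ∈ P) (hy : y ∈ subnSet x) :
    closure {x, y} ≤ (P : Subgroup G) ⊔ (N ⊓ centralizer {x}) := by
  have hcent : closure {x, y} ⊓ N ≤ centralizer {x} :=
    inf_le_centralizer_of_subnormalIn
      (hxk ▸ Nat.Coprime.pow_left k ((Nat.Prime.coprime_iff_not_dvd Fact.out).mpr hN)) hy
  obtain ⟨Q, hQ, hxQ, hle⟩ := exists_isPGroup_mem_le_sup_inf hq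
    (zpowers_le_closure_pair x y (mem_zpowers x))
    (IsPGroup.of_card (hxk ▸ Nat.card_zpowers x))
  obtain ⟨P₁, hQP₁⟩ := hQ.exists_le_sylow
  exact hle.trans (sup_le (hQP₁.trans (Sylow.le_sup_inf_centralizer hN hq hxP (hQP₁ hxQ)))
    (le_sup_of_le_right (le_inf inf_le_right hcent)))

end Subnormalizer

theorem stmt_5 {G : Type*} [Group G] [Finite G] (p : ℕ) (hp : p.Prime)
    (N : Subgroup G) (hN : N.Normal) (hN' : ¬ p ∣ Nat.card N)
    (hquot : IsPGroup p (G ⧸ N))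
    (x : G) (hx : ∃ n : ℕ, orderOf x = p ^ n)
    (P : Sylow p G) (hxP : x ∈ P) :
    SubG x = (P : Subgroup G) ⊔ (N ⊓ Subgroup.centralizer {x}) := by
  have : Fact p.Prime := ⟨hp⟩
  obtain ⟨k, hxk⟩ := hx
  refine le_antisymm ?_ (sup_le ?_ ?_)
  · exact (closure_le _).mpr fun y hy => closure_pair_le_sup_inf_centralizer hN' hquot hxk hxP hy
      (subset_closure (Set.mem_insert_of_mem x rfl))
  · exact fun y hy => subset_closure (mem_subnSet_of_isPGroup P.2 hxP hy)
  · exact fun c hc => subset_closure (mem_subnSet_of_mem_centralizer hc.2)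
end

section
/- Let G be a finite group, N a subnormal subgroup of G, and x ∈ N a p-element. Then G = N · Sub_G(x). -/
/-!
If `K₁ ⊴ K₂` and `x ∈ K₁` is a `p`-element, choose a Sylow `p`-subgroup `P` of `K₁` containing
`x`. The Frattini argument gives `K₂ = K₁ · N_{K₂}(P)`, and every `s` normalizing `P` lies in
`S_G(x)`: `⟨x⟩` is subnormal in the nilpotent group `P`, which is normal in `P⟨s⟩ ⊇ ⟨x, s⟩`.
Climbing a subnormal series from `N` to `G` one step at a time gives `G = N · Sub_G(x)`.
-/

open scoped Pointwise

section Subnormalizer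

open Subgroup

variable {G : Type*} [Group G]

theorem subnormalIn_iff_reflTransGen {H K : Subgroup G} :
    subnormalIn H K ↔ Relation.ReflTransGen normalIn H K := by
  constructor
  · rintro ⟨n, f, rfl, rfl, hf⟩
    induction n with
    | zero => exact .refl
    | succ n ih =>
      refine .head (by simpa using hf 0) ?_
      simpa [Fin.succ_last] using
        ih (fun i => f i.succ) fun i => by simpa [← Fin.succ_castSucc] using hf i.succ
  · intro h
    induction h with
    | refl => exact ⟨0, fun _ => H, rfl, rfl, fun i => i.elim0⟩
    | @tail B C _ hBC ih =>
      obtain ⟨n, f, h0, hl, hf⟩ := ih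
      refine ⟨n + 1, Fin.snoc f C, ?_, Fin.snoc_last _ _, Fin.lastCases ?_ fun i => ?_⟩
      · exact (Fin.snoc_castSucc (α := fun _ => Subgroup G) C f 0).trans h0
      · simpa [hl] using hBC
      · rw [Fin.succ_castSucc, Fin.snoc_castSucc, Fin.snoc_castSucc]
        exact hf i

theorem normalIn_of_le_normalizer {H K : Subgroup G} (hHK : H ≤ K)
    (hK : K ≤ normalizer (H : Set G)) : normalIn H K :=
  ⟨hHK, fun _ hk h hh => (mem_normalizer_iff.mp (hK hk) h).mp hh⟩

theorem normalIn.normal_subgroupOf {H K : Subgroup G} (h : normalIn H K) :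
    (H.subgroupOf K).Normal :=
  (normal_subgroupOf_iff h.1).2 fun a k ha hk => h.2 k hk a ha

theorem normalIn.inf {A B : Subgroup G} (h : normalIn A B) (L : Subgroup G) :
    normalIn (A ⊓ L) (B ⊓ L) :=
  ⟨inf_le_inf_right L h.1, fun k hk a ha =>
    ⟨h.2 k hk.1 a ha.1, L.mul_mem (L.mul_mem hk.2 ha.2) (L.inv_mem hk.2)⟩⟩

theorem normalIn.map {G' : Type*} [Group G'] {A B : Subgroup G} (h : normalIn A B)
    (φ : G →* G') : normalIn (A.map φ) (B.map φ) := by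
  refine ⟨map_mono h.1, ?_⟩
  rintro _ ⟨k, hk, rfl⟩ _ ⟨a, ha, rfl⟩
  exact ⟨k * a * k⁻¹, h.2 k hk a ha, by simp⟩

theorem subnormalIn.inf {A B : Subgroup G} (h : subnormalIn A B) (L : Subgroup G) :
    subnormalIn (A ⊓ L) (B ⊓ L) := by
  rw [subnormalIn_iff_reflTransGen] at h ⊢
  exact h.lift (· ⊓ L) fun _ _ hab => hab.inf L

theorem subnormalIn.map {G' : Type*} [Group G'] {A B : Subgroup G} (h : subnormalIn A B)
    (φ : G →* G') : subnormalIn (A.map φ) (B.map φ) := by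
  rw [subnormalIn_iff_reflTransGen] at h ⊢
  exact h.lift (Subgroup.map φ) fun _ _ hab => hab.map φ

theorem subnormalIn.tail {A B C : Subgroup G} (h : subnormalIn A B) (hBC : normalIn B C) :
    subnormalIn A C := by
  rw [subnormalIn_iff_reflTransGen] at h ⊢
  exact h.tail hBC

theorem subnormalIn_top_of_normalizerCondition [Finite G] (hG : NormalizerCondition G)
    (H : Subgroup G) : subnormalIn H ⊤ := by
  rw [subnormalIn_iff_reflTransGen]
  induction H using WellFoundedGT.induction with
  | _ H ih =>
    rcases eq_or_ne H ⊤ with rfl | hH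
    · exact .refl
    · have hlt := hG H hH.lt_top
      exact .head (normalIn_of_le_normalizer hlt.le le_rfl) (ih _ hlt)

theorem IsPGroup.subnormalIn_of_le [Finite G] {p : ℕ} [Fact p.Prime] {H K : Subgroup G}
    (hK : IsPGroup p K) (hHK : H ≤ K) : subnormalIn H K := by
  have := hK.isNilpotent
  simpa [subgroupOf_map_subtype, hHK, ← MonoidHom.range_eq_map] using
    (subnormalIn_top_of_normalizerCondition Group.normalizerCondition_of_isNilpotent
      (H.subgroupOf K)).map K.subtype

theorem map_mem_subnSet {G' : Type*} [Group G'] (φ : G →* G') {x y : G} (hy : y ∈ subnSet x) :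
    φ y ∈ subnSet (φ x) := by
  simpa [subnSet, MonoidHom.map_zpowers, MonoidHom.map_closure, Set.image_pair] using
    (show subnormalIn _ _ from hy).map φ

theorem mem_subnSet_of_mem_normalizer [Finite G] {p : ℕ} [Fact p.Prime] {P : Subgroup G}
    (hP : IsPGroup p P) {x s : G} (hx : x ∈ P) (hs : s ∈ normalizer (P : Set G)) :
    s ∈ subnSet x := by
  show subnormalIn _ _
  have hPQ : normalIn P (P ⊔ zpowers s) :=
    normalIn_of_le_normalizer le_sup_left (sup_le le_normalizer (zpowers_le.mpr hs))
  have hxs : closure {x, s} ≤ P ⊔ zpowers s := by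
    rw [closure_le]
    rintro y (rfl | rfl)
    · exact mem_sup_left hx
    · exact mem_sup_right (mem_zpowers y)
  have hx' : zpowers x ≤ closure {x, s} := zpowers_le.mpr (subset_closure (by simp))
  simpa [inf_eq_left.mpr hx', inf_eq_right.mpr hxs] using
    ((hP.subnormalIn_of_le (zpowers_le.mpr hx)).tail hPQ).inf (closure {x, s})

theorem subset_mul_subnSet_of_normalIn [Finite G] {p : ℕ} [Fact p.Prime] {K₁ K₂ : Subgroup G}
    (hK : normalIn K₁ K₂) {x : G} (hxK : x ∈ K₁) {n : ℕ} (hx : orderOf x = p ^ n) :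
    (K₂ : Set G) ⊆ K₁ * subnSet x := by
  intro g hg
  have := hK.normal_subgroupOf
  set N := K₁.subgroupOf K₂
  let x' : N := ⟨⟨x, hK.1 hxK⟩, hxK⟩
  have hx' : IsPGroup p (zpowers x') :=
    IsPGroup.of_card (by rw [Nat.card_zpowers, ← orderOf_submonoid, ← orderOf_submonoid, hx])
  obtain ⟨P, hP⟩ := hx'.exists_le_sylow
  have hxP : (x' : K₂) ∈ P.map N.subtype := ⟨x', hP (mem_zpowers x'), rfl⟩
  have hg' : (⟨g, hg⟩ : K₂) ∈ N ⊔ normalizer (P.map N.subtype : Set K₂) := by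
    rw [sup_comm, Sylow.normalizer_sup_eq_top P]
    trivial
  obtain ⟨m, hm, s, hs, hms⟩ := mem_sup_of_normal_left.mp hg'
  exact Set.mem_mul.2 ⟨m, hm, s,
    map_mem_subnSet K₂.subtype (mem_subnSet_of_mem_normalizer (P.2.map _) hxP hs),
    congrArg Subtype.val hms⟩

theorem subset_mul_subG_of_subnormalIn [Finite G] {p : ℕ} [Fact p.Prime] {N K : Subgroup G}
    (hNK : subnormalIn N K) {x : G} (hxN : x ∈ N) {n : ℕ} (hx : orderOf x = p ^ n) :
    (K : Set G) ⊆ N * SubG x := by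
  rw [subnormalIn_iff_reflTransGen] at hNK
  suffices x ∈ K ∧ (K : Set G) ⊆ N * SubG x from this.2
  induction hNK with
  | refl => exact ⟨hxN, fun y hy => Set.mem_mul.2 ⟨y, hy, 1, one_mem _, mul_one y⟩⟩
  | @tail B C _ hBC ih =>
    refine ⟨hBC.1 ih.1, ?_⟩
    calc (C : Set G) ⊆ B * subnSet x := subset_mul_subnSet_of_normalIn hBC ih.1 hx
      _ ⊆ N * SubG x * SubG x := Set.mul_subset_mul ih.2 subset_closure
      _ = N * SubG x := by rw [mul_assoc, coe_mul_coe]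

end Subnormalizer

theorem stmt_17 {G : Type*} [Group G] [Finite G] (p : ℕ) (hp : p.Prime)
    (N : Subgroup G) (hN : subnormalIn N (⊤ : Subgroup G))
    (x : G) (hxN : x ∈ N) (hx : ∃ n : ℕ, orderOf x = p ^ n) :
    ((N : Set G) * (SubG x : Set G)) = Set.univ := by
  have := Fact.mk hp
  obtain ⟨n, hn⟩ := hx
  refine Set.eq_univ_of_univ_subset ?_
  simpa using subset_mul_subG_of_subnormalIn hN hxN hn
end
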